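/- arXiv:1505.02564 — 2 statements merged into one kernel-verified Lean document; each statement's English description precedes it below -/
import Mathlib

section
/- For every integer k ≥ 7, the ratio (∫₀^π sin^{2k}θ dθ) / (∫₀^{π/8} sin^{2k}θ dθ) is at most 8^{k+1}. -/
/-!
Since `(sin θ ^ (n + 1) / cos θ)' = sin θ ^ n * (n + 1 + tan θ ^ 2)` and `tan` increases on
`[0, a]` for `a < π / 2`, we get `∫₀^a sin θ ^ n ≥ sin a ^ n * tan a / (n + 1 + tan a ^ 2)`.
At `a = π / 8` one has `8 * sin a ^ 2 = 1 + tan a ^ 2` with `t = tan a = √2 - 1`, so `8 ^ (k + 1)`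
times the denominator is at least `8 * (1 + t ^ 2) ^ k * t / (2 * k + 1 + t ^ 2)`, which increases
with `k`, while the numerator is the decreasing Wallis integral, at most `π * 429 / 2048` for
`k ≥ 7`.
-/

open intervalIntegral Real Set

theorem hasDerivAt_sin_pow_succ_div_cos {x : ℝ} (hx : cos x ≠ 0) (n : ℕ) :
    HasDerivAt (fun θ => sin θ ^ (n + 1) / cos θ) (sin x ^ n * (n + 1 + tan x ^ 2)) x := by
  refine (((hasDerivAt_sin x).pow (n + 1)).div (hasDerivAt_cos x) hx).congr_deriv ?_
  rw [Pi.pow_apply, tan_eq_sin_div_cos]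
  field_simp
  push_cast
  ring

theorem sin_pow_mul_tan_le_integral_sin_pow {a : ℝ} (ha₀ : 0 ≤ a) (ha : a < π / 2)
    (n : ℕ) : sin a ^ n * tan a ≤ (n + 1 + tan a ^ 2) * ∫ θ in 0..a, sin θ ^ n := by
  have hmem : ∀ θ ∈ Icc 0 a, θ ∈ Ioo (-(π / 2)) (π / 2) := fun θ hθ =>
    ⟨by linarith [hθ.1, pi_pos], hθ.2.trans_lt ha⟩
  have hcos : ∀ θ ∈ Icc 0 a, cos θ ≠ 0 := fun θ hθ => (cos_pos_of_mem_Ioo (hmem θ hθ)).ne'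
  have key := sub_le_integral_of_hasDeriv_right_of_le ha₀
    (g := fun θ => sin θ ^ (n + 1) / cos θ) (φ := fun θ => (n + 1 + tan a ^ 2) * sin θ ^ n)
    ((continuous_sin.pow _).continuousOn.div continuousOn_cos hcos)
    (fun θ hθ =>
      (hasDerivAt_sin_pow_succ_div_cos (hcos θ (Ioo_subset_Icc_self hθ)) n).hasDerivWithinAt)
    (by fun_prop : Continuous _).integrableOn_Icc
    (fun θ hθ => ?_)
  · rw [integral_const_mul] at key
    simpa [tan_eq_sin_div_cos, pow_succ, mul_div_assoc] using key
  · obtain ⟨hθ₀, hθa⟩ := Ioo_subset_Icc_self hθ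
    have htan : tan θ ≤ tan a :=
      strictMonoOn_tan.monotoneOn (hmem θ ⟨hθ₀, hθa⟩) (hmem a ⟨ha₀, le_rfl⟩) hθa
    have htan₀ : 0 ≤ tan θ := tan_nonneg_of_nonneg_of_le_pi_div_two hθ₀ (by linarith)
    have hsin₀ : 0 ≤ sin θ := sin_nonneg_of_nonneg_of_le_pi hθ₀ (by linarith [pi_pos])
    rw [mul_comm]
    gcongr

theorem sin_pi_div_eight_sq : sin (π / 8) ^ 2 = (2 - √2) / 4 := by
  rw [sin_sq_eq_half_sub, show 2 * (π / 8) = π / 4 by ring, cos_pi_div_four]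
  ring

theorem eight_mul_sin_pi_div_eight_sq : 8 * sin (π / 8) ^ 2 = 1 + tan (π / 8) ^ 2 := by
  have hcos : cos (π / 8) ≠ 0 :=
    (cos_pos_of_mem_Ioo ⟨by linarith [pi_pos], by linarith [pi_pos]⟩).ne'
  have hdouble : 2 * sin (π / 8) * cos (π / 8) = √2 / 2 := by
    rw [← sin_two_mul, show 2 * (π / 8) = π / 4 by ring, sin_pi_div_four]
  rw [tan_eq_sin_div_cos]
  field_simp
  linear_combination (2 * (2 * sin (π / 8) * cos (π / 8) + √2 / 2)) * hdouble
    + (1 / 2 : ℝ) * sq_sqrt (zero_le_two (α := ℝ)) - sin_sq_add_cos_sq (π / 8)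

theorem tan_pi_div_eight : tan (π / 8) = √2 - 1 := by
  have h := eight_mul_sin_pi_div_eight_sq
  rw [sin_pi_div_eight_sq] at h
  refine (pow_left_inj₀ (tan_nonneg_of_nonneg_of_le_pi_div_two (by positivity)
    (by linarith [pi_pos])) (sub_nonneg.2 one_lt_sqrt_two.le) two_ne_zero).mp ?_
  linear_combination -h - sq_sqrt (zero_le_two (α := ℝ))

theorem integral_sin_pow_two_mul_le_of_seven_le {k : ℕ} (hk : 7 ≤ k) :
    ∫ θ in 0..π, sin θ ^ (2 * k) ≤ π * 429 / 2048 :=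
  calc ∫ θ in 0..π, sin θ ^ (2 * k) ≤ ∫ θ in 0..π, sin θ ^ (2 * 7) :=
        integral_sin_pow_antitone (by omega)
    _ = π * 429 / 2048 := by
        rw [integral_sin_pow_even]
        norm_num [Finset.prod_range_succ]
        ring

theorem pi_mul_le_eight_mul_one_add_sq_pow {t : ℝ} (ht₁ : 0.4142 ≤ t) (ht₂ : t ≤ 0.4143)
    {k : ℕ} (hk : 7 ≤ k) :
    π * 429 / 2048 * (2 * k + 1 + t ^ 2) ≤ 8 * (1 + t ^ 2) ^ k * t := by
  induction k, hk using Nat.le_induction with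
  | base =>
    calc π * 429 / 2048 * (2 * ((7 : ℕ) : ℝ) + 1 + t ^ 2)
        ≤ 3.1416 * 429 / 2048 * (15 + 0.4143 ^ 2) := by
          push_cast
          gcongr
          · exact pi_lt_d4.le
          · norm_num
      _ ≤ 8 * (1 + 0.4142 ^ 2) ^ 7 * 0.4142 := by norm_num
      _ ≤ 8 * (1 + t ^ 2) ^ 7 * t := by gcongr
  | succ k hk ih =>
    -- the right side gains the factor `1 + t ^ 2`, the left side only the summand `π * 429 / 1024`
    have hgrowth : π * 429 / 1024 ≤ t ^ 2 * (π * 429 / 2048 * (2 * k + 1 + t ^ 2)) := by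
      have : (7 : ℝ) ≤ k := by exact_mod_cast hk
      have : 2 ≤ t ^ 2 * (2 * k + 1 + t ^ 2) := by nlinarith
      nlinarith [pi_pos]
    calc π * 429 / 2048 * (2 * ((k + 1 : ℕ) : ℝ) + 1 + t ^ 2)
        ≤ (1 + t ^ 2) * (π * 429 / 2048 * (2 * k + 1 + t ^ 2)) := by
          push_cast
          linarith
      _ ≤ (1 + t ^ 2) * (8 * (1 + t ^ 2) ^ k * t) := by gcongr
      _ = 8 * (1 + t ^ 2) ^ (k + 1) * t := by ring

/-- For every integer `k ≥ 7`, the ratio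
`(∫₀^π sin^{2k} θ dθ) / (∫₀^{π/8} sin^{2k} θ dθ)` is at most `8^{k+1}`. -/
theorem sin_integral_ratio_le (k : ℕ) (hk : 7 ≤ k) :
    (∫ θ in (0:ℝ)..Real.pi, Real.sin θ ^ (2 * k)) /
      (∫ θ in (0:ℝ)..(Real.pi / 8), Real.sin θ ^ (2 * k)) ≤ 8 ^ (k + 1) := by
  set B := ∫ θ in (0:ℝ)..(π / 8), sin θ ^ (2 * k)
  set t := tan (π / 8)
  have hsqrt : 1.4142 ≤ √2 ∧ √2 ≤ 1.4143 := by
    constructor <;> nlinarith [sq_sqrt (zero_le_two (α := ℝ)), sqrt_nonneg 2]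
  have ht : t = √2 - 1 := tan_pi_div_eight
  have ht₁ : 0.4142 ≤ t := by linarith
  have ht₂ : t ≤ 0.4143 := by linarith
  have hc : 0 < 2 * (k : ℝ) + 1 + t ^ 2 := by positivity
  have hsin : 0 < sin (π / 8) := sin_pos_of_pos_of_lt_pi (by positivity) (by linarith [pi_pos])
  have hlower : sin (π / 8) ^ (2 * k) * t ≤ (2 * k + 1 + t ^ 2) * B := by
    simpa using sin_pow_mul_tan_le_integral_sin_pow (a := π / 8) (by positivity)
      (by linarith [pi_pos]) (2 * k)
  have hB : 0 < B :=
    pos_of_mul_pos_right ((by positivity : 0 < sin (π / 8) ^ (2 * k) * t).trans_le hlower) hc.le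
  rw [div_le_iff₀ hB]
  refine le_of_mul_le_mul_right ?_ hc
  calc (∫ θ in (0:ℝ)..π, sin θ ^ (2 * k)) * (2 * k + 1 + t ^ 2)
      ≤ π * 429 / 2048 * (2 * k + 1 + t ^ 2) := by
        gcongr
        exact integral_sin_pow_two_mul_le_of_seven_le hk
    _ ≤ 8 * (1 + t ^ 2) ^ k * t := pi_mul_le_eight_mul_one_add_sq_pow ht₁ ht₂ hk
    _ = 8 ^ (k + 1) * (sin (π / 8) ^ (2 * k) * t) := by
        rw [← eight_mul_sin_pi_div_eight_sq, pow_mul, mul_pow, pow_succ']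
        ring
    _ ≤ 8 ^ (k + 1) * ((2 * k + 1 + t ^ 2) * B) := by gcongr
    _ = 8 ^ (k + 1) * B * (2 * k + 1 + t ^ 2) := by ring
end

section
/- For 0 ≤ r₁ < r₂ ≤ k and ρ ∈ (0,1), (log(1+r₂²) − log(1+r₁²))/(arctan r₂ − arctan r₁)^ρ ≤ max(log(1+k²), 2k); consequently this supremum is at most 2k for k ≥ 1. -/
/-!
The function `x ↦ 2k·arctan x − log (1 + x²)` has derivative `2(k − x)/(1 + x²) ≥ 0` on `(-∞, k]`,
so the numerator is at most `2k·(arctan r₂ − arctan r₁)`. It is also at most `log (1 + k²) ≤ 2k`,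
hence at most `2k·min(arctan r₂ − arctan r₁, 1)`, and `min(d, 1) ≤ d ^ ρ` for `ρ ∈ [0, 1]`.
-/

open Real Set

theorem hasDerivAt_mul_arctan_sub_log_one_add_sq (k x : ℝ) :
    HasDerivAt (fun x : ℝ => 2 * k * arctan x - log (1 + x ^ 2)) (2 * (k - x) / (1 + x ^ 2)) x := by
  have hpos : (0 : ℝ) < 1 + x ^ 2 := by positivity
  have hsq : HasDerivAt (fun x : ℝ => 1 + x ^ 2) (2 * x) x := by
    simpa using (hasDerivAt_pow 2 x).const_add 1
  refine (((hasDerivAt_arctan x).const_mul (2 * k)).sub (hsq.log hpos.ne')).congr_deriv ?_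
  field_simp

theorem monotoneOn_mul_arctan_sub_log_one_add_sq (k : ℝ) :
    MonotoneOn (fun x : ℝ => 2 * k * arctan x - log (1 + x ^ 2)) (Iic k) := by
  refine monotoneOn_of_hasDerivWithinAt_nonneg (convex_Iic k) ?_
    (fun x _ => (hasDerivAt_mul_arctan_sub_log_one_add_sq k x).hasDerivWithinAt) ?_
  · exact fun x _ => (hasDerivAt_mul_arctan_sub_log_one_add_sq k x).continuousAt.continuousWithinAt
  · intro x hx
    rw [interior_Iic] at hx
    have : 0 ≤ k - x := sub_nonneg.mpr (le_of_lt hx)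
    positivity

theorem log_one_add_sq_sub_le_mul_arctan_sub {k a b : ℝ} (hab : a ≤ b) (hb : b ≤ k) :
    log (1 + b ^ 2) - log (1 + a ^ 2) ≤ 2 * k * (arctan b - arctan a) := by
  have := monotoneOn_mul_arctan_sub_log_one_add_sq k (hab.trans hb) hb hab
  simp only at this
  linarith

theorem log_one_add_sq_le_two_mul {k : ℝ} (hk : 0 ≤ k) : log (1 + k ^ 2) ≤ 2 * k := by
  rw [log_le_iff_le_exp (by positivity)]
  calc 1 + k ^ 2 ≤ (k + 1) ^ 2 := by nlinarith
    _ ≤ exp k ^ 2 := pow_le_pow_left₀ (by linarith) (add_one_le_exp k) 2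
    _ = exp (2 * k) := by rw [← exp_nat_mul, Nat.cast_ofNat]

theorem min_one_le_rpow {d ρ : ℝ} (hd : 0 < d) (hρ₀ : 0 ≤ ρ) (hρ₁ : ρ ≤ 1) : min d 1 ≤ d ^ ρ := by
  rcases le_total d 1 with hd₁ | hd₁
  · exact (min_le_left d 1).trans (self_le_rpow_of_le_one hd.le hd₁ hρ₁)
  · exact (min_le_right d 1).trans (one_le_rpow hd₁ hρ₀)

theorem log_quotient_le_max_general (k : ℕ) (ρ : ℝ) (hρ : 0 < ρ) (hρ1 : ρ < 1)
    (r₁ r₂ : ℝ) (h₁ : 0 ≤ r₁) (h₁₂ : r₁ < r₂) (h₂ : r₂ ≤ k) :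
    (Real.log (1 + r₂ ^ 2) - Real.log (1 + r₁ ^ 2)) /
        (Real.arctan r₂ - Real.arctan r₁) ^ ρ ≤
      max (Real.log (1 + (k : ℝ) ^ 2)) (2 * (k : ℝ)) ∧
    (Real.log (1 + r₂ ^ 2) - Real.log (1 + r₁ ^ 2)) /
        (Real.arctan r₂ - Real.arctan r₁) ^ ρ ≤ 2 * (k : ℝ) := by
  set D := arctan r₂ - arctan r₁
  set N := log (1 + r₂ ^ 2) - log (1 + r₁ ^ 2)
  have hk : (0 : ℝ) ≤ k := k.cast_nonneg
  have hD : 0 < D := sub_pos.mpr (arctan_strictMono h₁₂)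
  have hN_arctan : N ≤ 2 * k * D := log_one_add_sq_sub_le_mul_arctan_sub h₁₂.le h₂
  have hN_log : N ≤ log (1 + (k : ℝ) ^ 2) := by
    have : 0 ≤ log (1 + r₁ ^ 2) := log_nonneg (by nlinarith)
    have : log (1 + r₂ ^ 2) ≤ log (1 + (k : ℝ) ^ 2) := log_le_log (by positivity) (by nlinarith)
    linarith
  have hN : N ≤ 2 * k * min D 1 := by
    rw [mul_min_of_nonneg _ _ (by positivity), mul_one]
    exact le_min hN_arctan (hN_log.trans (log_one_add_sq_le_two_mul hk))
  have hquot : N / D ^ ρ ≤ 2 * k := by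
    rw [div_le_iff₀ (rpow_pos_of_pos hD ρ)]
    exact hN.trans (mul_le_mul_of_nonneg_left (min_one_le_rpow hD hρ.le hρ1.le) (by positivity))
  exact ⟨hquot.trans (le_max_right _ _), hquot⟩

/-- For `0 ≤ r₁ < r₂ ≤ k` (with `k ≥ 1`) and `ρ ∈ (0,1)`,
`(log(1+r₂²) − log(1+r₁²))/(arctan r₂ − arctan r₁)^ρ ≤ max(log(1+k²), 2k)`;
consequently this quantity is at most `2k`. -/
theorem log_quotient_le_max (k : ℕ) (hk : 1 ≤ k) (ρ : ℝ) (hρ : 0 < ρ) (hρ1 : ρ < 1)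
    (r₁ r₂ : ℝ) (h₁ : 0 ≤ r₁) (h₁₂ : r₁ < r₂) (h₂ : r₂ ≤ k) :
    (Real.log (1 + r₂ ^ 2) - Real.log (1 + r₁ ^ 2)) /
        (Real.arctan r₂ - Real.arctan r₁) ^ ρ ≤
      max (Real.log (1 + (k : ℝ) ^ 2)) (2 * (k : ℝ)) ∧
    (Real.log (1 + r₂ ^ 2) - Real.log (1 + r₁ ^ 2)) /
        (Real.arctan r₂ - Real.arctan r₁) ^ ρ ≤ 2 * (k : ℝ) :=
  log_quotient_le_max_general k ρ hρ hρ1 r₁ r₂ h₁ h₁₂ h₂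
end
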